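/- arXiv:1807.01046 — 2 statements merged into one kernel-verified Lean document; each statement's English description precedes it below -/
import Mathlib

section
/- Let k, l ≥ 1, let f be a formal diffeomorphism of (ℂ,0) tangent to the identity at order k and g one tangent to the identity at order l. Then the commutator f ∘ g ∘ f^{-1} ∘ g^{-1} is tangent to the identity at order k + l. -/
/-!
Write `f = X + a` and `g = X + b` with `X^(k+1) ∣ a` and `X^(l+1) ∣ b`. Substituting `g` for `X`
changes a series divisible by `X^j` only by a multiple of `X^(j+l)`, so `a ∘ g ≡ a` and
`b ∘ f ≡ b` modulo `X^(k+l+1)`, whence `f ∘ g ≡ X + a + b ≡ g ∘ f`. Substituting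
`h = f⁻¹ ∘ g⁻¹` preserves congruences modulo powers of `X`, so the commutator `(f ∘ g) ∘ h` is
congruent to `(g ∘ f) ∘ h = X`. Composition is handled through Mathlib's `PowerSeries.subst`,
with which `pcomp` agrees.
-/

open PowerSeries

/-- Composition `f ∘ g` of formal power series (valid when `g` has zero constant term). -/
noncomputable def pcomp (f g : PowerSeries ℂ) : PowerSeries ℂ :=
  PowerSeries.mk fun m => ∑ n ∈ Finset.range (m + 1), coeff n f * coeff m (g ^ n)

/-- `f` is tangent to the identity at order `k`, i.e. `f(t) ≡ t mod t^(k+1)`. -/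
def TangentId (k : ℕ) (f : PowerSeries ℂ) : Prop :=
  constantCoeff f = 0 ∧ coeff 1 f = 1 ∧ ∀ n, 2 ≤ n → n ≤ k → coeff n f = 0

namespace PowerSeries

variable {R : Type*} [CommRing R] {g u : R⟦X⟧}

lemma X_pow_dvd_subst (hg : constantCoeff g = 0) {n : ℕ} (hu : X ^ n ∣ u) :
    X ^ n ∣ u.subst g := by
  obtain ⟨w, rfl⟩ := hu
  rw [subst_mul (.of_constantCoeff_zero' hg), subst_pow (.of_constantCoeff_zero' hg),
    subst_X (.of_constantCoeff_zero' hg)]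
  exact dvd_mul_of_dvd_left (pow_dvd_pow_of_dvd (X_dvd_iff.mpr hg) n) _

lemma constantCoeff_eq_zero_of_X_pow_dvd_sub_X {l : ℕ} (hg : X ^ (l + 1) ∣ g - X) :
    constantCoeff g = 0 := by
  simpa using X_dvd_iff.mp ((dvd_pow_self X l.succ_ne_zero).trans hg)

lemma subst_X_mul_sub (hg : constantCoeff g = 0) (w : R⟦X⟧) :
    (X * w).subst g - X * w = (g - X) * w.subst g + X * (w.subst g - w) := by
  rw [subst_mul (.of_constantCoeff_zero' hg), subst_X (.of_constantCoeff_zero' hg)]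
  ring

lemma X_pow_dvd_subst_sub_self {j l : ℕ} (hg : X ^ (l + 1) ∣ g - X) (hj : j ≤ l + 1)
    (u : R⟦X⟧) : X ^ j ∣ u.subst g - u := by
  have hg0 := constantCoeff_eq_zero_of_X_pow_dvd_sub_X hg
  induction j generalizing u with
  | zero => simp
  | succ j ih =>
    have hC : (C (constantCoeff u)).subst g = C (constantCoeff u) := subst_C _
    rw [eq_X_mul_shift_add_const u, subst_add (.of_constantCoeff_zero' hg0), hC,
      add_sub_add_right_eq_sub, subst_X_mul_sub hg0]
    refine dvd_add (dvd_mul_of_dvd_left ((pow_dvd_pow X hj).trans hg) _) ?_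
    rw [pow_succ']
    exact mul_dvd_mul_left X (ih (by omega) _)

lemma X_pow_dvd_subst_sub_self_of_X_pow_dvd {k l : ℕ} (hg : X ^ (l + 1) ∣ g - X)
    (hu : X ^ k ∣ u) : X ^ (k + l) ∣ u.subst g - u := by
  have hg0 := constantCoeff_eq_zero_of_X_pow_dvd_sub_X hg
  induction k generalizing u with
  | zero => simpa using X_pow_dvd_subst_sub_self hg l.le_succ u
  | succ k ih =>
    obtain ⟨v, rfl⟩ := hu
    have hw : X ^ k ∣ X ^ k * v := dvd_mul_right _ _
    rw [show X ^ (k + 1) * v = X * (X ^ k * v) by ring, subst_X_mul_sub hg0]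
    refine dvd_add ?_ ?_
    · rw [show k + 1 + l = (l + 1) + k by omega, pow_add]
      exact mul_dvd_mul hg (X_pow_dvd_subst hg0 hw)
    · rw [show k + 1 + l = (k + l) + 1 by omega, pow_succ']
      exact mul_dvd_mul_left X (ih hw)

end PowerSeries

lemma pcomp_eq_subst {f g : PowerSeries ℂ} (hg : constantCoeff g = 0) :
    pcomp f g = f.subst g := by
  ext m
  rw [coeff_subst' (.of_constantCoeff_zero' hg),
    finsum_eq_sum_of_support_subset (s := Finset.range (m + 1)) _ ?_]
  · simp [pcomp]
  · intro n hn
    by_contra hnm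
    have hgn : X ^ n ∣ g ^ n := pow_dvd_pow_of_dvd (X_dvd_iff.mpr hg) n
    exact hn (by simp [X_pow_dvd_iff.mp hgn m (by simpa using hnm)])

lemma TangentId.X_pow_dvd_sub_X {k : ℕ} {f : PowerSeries ℂ} (hf : TangentId k f) :
    X ^ (k + 1) ∣ f - X := by
  obtain ⟨h0, h1, hn⟩ := hf
  refine X_pow_dvd_iff.mpr fun m hm => ?_
  rw [map_sub, coeff_X, sub_eq_zero]
  rcases m with _ | _ | m
  · simpa using h0
  · simpa using h1
  · simpa using hn (m + 2) (by omega) (by omega)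

lemma tangentId_of_X_pow_dvd_sub_X {k : ℕ} (hk : 1 ≤ k) {f : PowerSeries ℂ}
    (hf : X ^ (k + 1) ∣ f - X) : TangentId k f := by
  have hcoeff : ∀ m ≤ k, coeff m f = coeff m X := fun m hm =>
    sub_eq_zero.mp (by simpa using X_pow_dvd_iff.mp hf m (by omega))
  refine ⟨?_, ?_, fun n h2 hn => ?_⟩
  · simpa using hcoeff 0 (by omega)
  · simpa using hcoeff 1 hk
  · simpa [coeff_X, show n ≠ 1 by omega] using hcoeff n hn

lemma TangentId.X_pow_dvd_subst_sub_subst {k l : ℕ} {f g : PowerSeries ℂ} (hf : TangentId k f)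
    (hg : TangentId l g) : X ^ (k + l + 1) ∣ f.subst g - g.subst f := by
  have hfg : f.subst g - g.subst f =
      ((f - X).subst g - (f - X)) - ((g - X).subst f - (g - X)) := by
    rw [subst_sub (.of_constantCoeff_zero' hg.1), subst_sub (.of_constantCoeff_zero' hf.1),
      subst_X (.of_constantCoeff_zero' hg.1), subst_X (.of_constantCoeff_zero' hf.1)]
    ring
  rw [hfg, show k + l + 1 = k + 1 + l by omega]
  refine dvd_sub (X_pow_dvd_subst_sub_self_of_X_pow_dvd hg.X_pow_dvd_sub_X hf.X_pow_dvd_sub_X) ?_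
  rw [show k + 1 + l = l + 1 + k by omega]
  exact X_pow_dvd_subst_sub_self_of_X_pow_dvd hf.X_pow_dvd_sub_X hg.X_pow_dvd_sub_X

theorem stmt4_general (k l : ℕ) (hk : 1 ≤ k) (f g finv ginv : PowerSeries ℂ)
    (hf : TangentId k f) (hg : TangentId l g)
    (hf0 : constantCoeff finv = 0) (hg0 : constantCoeff ginv = 0)
    (hf1 : pcomp f finv = X) (hg1 : pcomp g ginv = X) :
    TangentId (k + l) (pcomp f (pcomp g (pcomp finv ginv))) := by
  set h : ℂ⟦X⟧ := subst ginv finv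
  have hh : constantCoeff h = 0 := constantCoeff_subst_eq_zero hg0 _ hf0
  have hgh : constantCoeff (subst h g) = 0 := constantCoeff_subst_eq_zero hh _ hg.1
  rw [pcomp_eq_subst hf0] at hf1
  rw [pcomp_eq_subst hg0] at hg1
  rw [pcomp_eq_subst hg0, pcomp_eq_subst hh, pcomp_eq_subst hgh]
  have hgfh : subst h (subst f g : ℂ⟦X⟧) = X := by
    rw [subst_comp_subst_apply (.of_constantCoeff_zero' hf.1) (.of_constantCoeff_zero' hh),
      ← subst_comp_subst_apply (.of_constantCoeff_zero' hf0) (.of_constantCoeff_zero' hg0), hf1,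
      subst_X (.of_constantCoeff_zero' hg0), hg1]
  have hdvd := X_pow_dvd_subst hh (hf.X_pow_dvd_subst_sub_subst hg)
  rw [subst_sub (.of_constantCoeff_zero' hh), hgfh,
    subst_comp_subst_apply (.of_constantCoeff_zero' hg.1) (.of_constantCoeff_zero' hh)] at hdvd
  exact tangentId_of_X_pow_dvd_sub_X (by omega) hdvd

/-- If `f` is tangent to the identity at order `k ≥ 1` and `g` at order `l ≥ 1`, then the
commutator `f ∘ g ∘ f⁻¹ ∘ g⁻¹` is tangent to the identity at order `k + l`. -/
theorem stmt4 (k l : ℕ) (hk : 1 ≤ k) (hl : 1 ≤ l) (f g finv ginv : PowerSeries ℂ)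
    (hf : TangentId k f) (hg : TangentId l g)
    (hf0 : constantCoeff finv = 0) (hg0 : constantCoeff ginv = 0)
    (hf1 : pcomp f finv = X) (hf2 : pcomp finv f = X)
    (hg1 : pcomp g ginv = X) (hg2 : pcomp ginv g = X) :
    TangentId (k + l) (pcomp f (pcomp g (pcomp finv ginv))) :=
  stmt4_general k l hk f g finv ginv hf hg hf0 hg0 hf1 hg1
end

section
/- Let k ≥ 0 and let H ∈ ℂ[[x,y]] be a formal power series with H(0,y) = 0 whose partial derivative satisfies ∂H/∂x = 2x·y^{k+1}·u for some unit u ∈ ℂ[[x,y]]. Then H = x²·y^{k+1}·v for some unit v ∈ ℂ[[x,y]]. -/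
/-!
Work coefficientwise in `y`: each coefficient `h(x)` of `H` satisfies `h(0) = 0` and `h' = 2x·g`,
with `g` the matching coefficient of `y^(k+1)·u`. In characteristic zero this forces
`h = x²·Σ 2gₘ/(m+2)·xᵐ`, and the series `Σ 2gₘ/(m+2)·xᵐ` has the same constant term as `g`.
The operation `g ↦ Σ 2gₘ/(m+2)·xᵐ` commutes with multiplication by `y^(k+1)`, so
`H = x²·y^(k+1)·v` with `v(0,0) = u(0,0) ≠ 0`.
-/

open PowerSeries

/-- We model `ℂ[[x,y]]` as `ℂ[[x]][[y]]`: the outer variable `X` is `y`, and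
`x` is `PowerSeries.C (PowerSeries ℂ) PowerSeries.X`. -/
abbrev PS2 : Type := PowerSeries (PowerSeries ℂ)

/-- The variable `x` of `ℂ[[x,y]]`. -/
noncomputable def xVar : PS2 := (PowerSeries.C : PowerSeries ℂ →+* PS2) PowerSeries.X

/-- The partial derivative `∂/∂x` on `ℂ[[x,y]] = ℂ[[x]][[y]]` (coefficientwise in `y`). -/
noncomputable def dX (H : PS2) : PS2 :=
  PowerSeries.mk fun n => PowerSeries.derivativeFun ((PowerSeries.coeff n H : PowerSeries ℂ))

/-- The partial derivative `∂/∂y` on `ℂ[[x,y]] = ℂ[[x]][[y]]`. -/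
noncomputable def dY (H : PS2) : PS2 := PowerSeries.derivativeFun H

/-- The value at the origin `(0,0)` of an element of `ℂ[[x,y]]`. -/
noncomputable def evalOrigin (H : PS2) : ℂ :=
  (constantCoeff : PowerSeries ℂ →+* ℂ) ((constantCoeff : PS2 →+* PowerSeries ℂ) H)

namespace PowerSeries

theorem coeff_succ_two_mul_X_mul {R : Type*} [CommSemiring R] (g : R⟦X⟧) (m : ℕ) :
    coeff (m + 1) (2 * X * g) = 2 * coeff m g := by
  rw [mul_comm 2 X, mul_assoc, coeff_succ_X_mul, ← map_ofNat C 2, coeff_C_mul]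

variable {K : Type*} [Field K]

/-- The unique `h` with `d/dX (X² h) = 2 X g` (in characteristic zero). -/
noncomputable def halfIntegral (g : K⟦X⟧) : K⟦X⟧ :=
  mk fun m => 2 / (m + 2) * coeff m g

@[simp]
theorem halfIntegral_zero : halfIntegral (0 : K⟦X⟧) = 0 := by
  ext; simp [halfIntegral]

variable [CharZero K]

@[simp]
theorem constantCoeff_halfIntegral (g : K⟦X⟧) :
    constantCoeff (halfIntegral g) = constantCoeff g := by
  rw [← coeff_zero_eq_constantCoeff_apply, ← coeff_zero_eq_constantCoeff_apply]
  simp [halfIntegral]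

theorem derivative_X_sq_mul_halfIntegral (g : K⟦X⟧) :
    d⁄dX K (X ^ 2 * halfIntegral g) = 2 * X * g := by
  ext (_ | m)
  · simp [mul_assoc]
  · have hm : (m : K) + 2 ≠ 0 := by norm_cast
    rw [coeff_derivative, show m + 1 + 1 = m + 2 by rfl, coeff_X_pow_mul, coeff_succ_two_mul_X_mul,
      halfIntegral, coeff_mk]
    push_cast
    field_simp
    ring

theorem eq_X_sq_mul_halfIntegral {f g : K⟦X⟧} (hf : constantCoeff f = 0)
    (hd : d⁄dX K f = 2 * X * g) : f = X ^ 2 * halfIntegral g :=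
  derivative.ext (hd.trans (derivative_X_sq_mul_halfIntegral g).symm) (by simp [hf])

end PowerSeries

noncomputable def halfIntegralX (w : PS2) : PS2 :=
  mk fun n => halfIntegral (coeff n w)

theorem evalOrigin_halfIntegralX (w : PS2) : evalOrigin (halfIntegralX w) = evalOrigin w := by
  simp [evalOrigin, halfIntegralX, ← coeff_zero_eq_constantCoeff]

theorem halfIntegralX_X_pow_mul (m : ℕ) (w : PS2) :
    halfIntegralX (X ^ m * w) = X ^ m * halfIntegralX w := by
  ext1 n
  simp only [halfIntegralX, coeff_mk, coeff_X_pow_mul']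
  split_ifs <;> simp

theorem eq_xVar_sq_mul_halfIntegralX {H G : PS2}
    (h0 : PowerSeries.map (constantCoeff : PowerSeries ℂ →+* ℂ) H = 0)
    (hd : dX H = 2 * xVar * G) :
    H = xVar ^ 2 * halfIntegralX G := by
  ext1 n
  have hn0 : constantCoeff (coeff n H) = 0 := by
    simpa using congrArg (coeff n) h0
  have hnd : d⁄dX ℂ (coeff n H) = 2 * X * coeff n G := by
    have := congrArg (coeff n) hd
    rwa [dX, coeff_mk, xVar, ← map_ofNat C 2, ← map_mul, coeff_C_mul] at this
  rw [eq_X_sq_mul_halfIntegral hn0 hnd, xVar, ← map_pow, coeff_C_mul, halfIntegralX, coeff_mk]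

/-- If `H ∈ ℂ[[x,y]]` satisfies `H(0,y) = 0` and `∂H/∂x = 2x·y^(k+1)·u` with `u` a unit, then
`H = x²·y^(k+1)·v` for some unit `v`. -/
theorem stmt12 (k : ℕ) (H u : PS2)
    (h0 : PowerSeries.map (constantCoeff : PowerSeries ℂ →+* ℂ) H = 0)
    (hu : evalOrigin u ≠ 0)
    (hd : dX H = 2 * xVar * X ^ (k + 1) * u) :
    ∃ v : PS2, evalOrigin v ≠ 0 ∧ H = xVar ^ 2 * X ^ (k + 1) * v := by
  refine ⟨halfIntegralX u, (evalOrigin_halfIntegralX u).trans_ne hu, ?_⟩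
  rw [mul_assoc, ← halfIntegralX_X_pow_mul]
  exact eq_xVar_sq_mul_halfIntegralX h0 (by rw [hd, mul_assoc])
end
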